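/- Let σ be a partition of the primes and A a σ-subnormal subgroup of a finite group G. Then the σ-nilpotent residual A^{𝔑_σ} of A is subnormal in G. -/

import Mathlib

open Subgroup
open scoped Pointwise

section Defs

variable {ι : Type*}

/-- `σ` is a partition of the set of all primes. -/
structure IsPrimePartition (σ : ι → Set ℕ) : Prop where
  prime_of_mem : ∀ i p, p ∈ σ i → p.Prime
  existsUnique_mem : ∀ p : ℕ, p.Prime → ∃! i, p ∈ σ i

/-- every prime dividing `n` lies in the block `σ i`. -/
def IsSigmaNumber (σ : ι → Set ℕ) (i : ι) (n : ℕ) : Prop :=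
  ∀ p : ℕ, p.Prime → p ∣ n → p ∈ σ i

/-- `G` is a `σ i`-group. -/
def IsSigmaIGroup (σ : ι → Set ℕ) (i : ι) (G : Type*) [Group G] : Prop :=
  IsSigmaNumber σ i (Nat.card G)

/-- `G` is σ-primary: it is a `σ i`-group for some `i`. -/
def IsSigmaPrimary (σ : ι → Set ℕ) (G : Type*) [Group G] : Prop :=
  ∃ i, IsSigmaIGroup σ i G

/-- `G` is σ-nilpotent: `G` is the internal direct product of normal
σ-primary subgroups (one `σ i`-subgroup for each block). -/
def IsSigmaNilpotent (σ : ι → Set ℕ) (G : Type*) [Group G] : Prop :=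
  ∃ H : ι → Subgroup G, (∀ i, (H i).Normal) ∧ (∀ i, IsSigmaIGroup σ i ↥(H i)) ∧
    iSupIndep H ∧ iSup H = ⊤

/-- One step in a σ-subnormal chain: `A ≤ B` and either `A` is normal in `B` or
`B/(A_B)` (quotient by the normal core of `A` in `B`) is σ-primary. -/
def SigmaSubnormalStep (σ : ι → Set ℕ) {G : Type*} [Group G] (A B : Subgroup G) : Prop :=
  A ≤ B ∧ (((A.subgroupOf B).Normal) ∨
    IsSigmaPrimary σ (↥B ⧸ (A.subgroupOf B).normalCore))

/-- `A` is σ-subnormal in `G`. -/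
def IsSigmaSubnormal (σ : ι → Set ℕ) {G : Type*} [Group G] (A : Subgroup G) : Prop :=
  ∃ n, ∃ C : Fin (n + 1) → Subgroup G, C 0 = A ∧ C (Fin.last n) = ⊤ ∧
    ∀ k : Fin n, SigmaSubnormalStep σ (C k.castSucc) (C k.succ)

/-- `A` is subnormal in `G`. -/
def IsSubnormalSub {G : Type*} [Group G] (A : Subgroup G) : Prop :=
  ∃ n, ∃ C : Fin (n + 1) → Subgroup G, C 0 = A ∧ C (Fin.last n) = ⊤ ∧
    ∀ k : Fin n, C k.castSucc ≤ C k.succ ∧ ((C k.castSucc).subgroupOf (C k.succ)).Normal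

/-- `M` is a modular subgroup of `G`: a modular element of the subgroup lattice. -/
def IsModularSubgroup {G : Type*} [Group G] (M : Subgroup G) : Prop :=
  (∀ X Z : Subgroup G, X ≤ Z → X ⊔ (M ⊓ Z) = (X ⊔ M) ⊓ Z) ∧
  (∀ Y Z : Subgroup G, M ≤ Z → M ⊔ (Y ⊓ Z) = (M ⊔ Y) ⊓ Z)

/-- `A` is submodular in `G`: there is a chain from `A` to `G` with each
term modular in the next. -/
def IsSubmodular {G : Type*} [Group G] (A : Subgroup G) : Prop :=
  ∃ n, ∃ C : Fin (n + 1) → Subgroup G, C 0 = A ∧ C (Fin.last n) = ⊤ ∧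
    ∀ k : Fin n, C k.castSucc ≤ C k.succ ∧
      IsModularSubgroup ((C k.castSucc).subgroupOf (C k.succ))

/-- `H` is a Hall `σ i`-subgroup of `G`. -/
def IsHallSigmaI (σ : ι → Set ℕ) (i : ι) {G : Type*} [Group G] (H : Subgroup G) : Prop :=
  IsSigmaNumber σ i (Nat.card H) ∧ ∀ p : ℕ, p.Prime → p ∣ H.index → p ∉ σ i

/-- `G` is σ-full: it has a Hall `σ i`-subgroup for every `σ i ∈ σ(G)`. -/
def IsSigmaFull (σ : ι → Set ℕ) (G : Type*) [Group G] : Prop :=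
  ∀ i, (∃ p : ℕ, p.Prime ∧ p ∈ σ i ∧ p ∣ Nat.card G) →
    ∃ H : Subgroup G, IsHallSigmaI σ i H

/-- Two subgroups permute. -/
def Permutes {G : Type*} [Group G] (A B : Subgroup G) : Prop :=
  (A : Set G) * (B : Set G) = (B : Set G) * (A : Set G)

/-- `A` is σ-permutable in `G`: it permutes with every Hall `σ i`-subgroup of `G`
(hence with all their conjugates). -/
def IsSigmaPermutable (σ : ι → Set ℕ) {G : Type*} [Group G] (A : Subgroup G) : Prop :=
  ∀ i, ∀ H : Subgroup G, IsHallSigmaI σ i H → Permutes A H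

/-- `A` is quasinormal (permutable) in `G`. -/
def IsQuasinormal {G : Type*} [Group G] (A : Subgroup G) : Prop :=
  ∀ B : Subgroup G, Permutes A B

/-- `A` is σ-quasinormal in `G`: modular and σ-subnormal. -/
def IsSigmaQuasinormal (σ : ι → Set ℕ) {G : Type*} [Group G] (A : Subgroup G) : Prop :=
  IsModularSubgroup A ∧ IsSigmaSubnormal σ A

/-- σ-permutability is a transitive relation on `G`. -/
def IsPSigmaTGroup (σ : ι → Set ℕ) (G : Type*) [Group G] : Prop :=
  ∀ K H : Subgroup G, H ≤ K → IsSigmaPermutable σ (H.subgroupOf K) →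
    IsSigmaPermutable σ K → IsSigmaPermutable σ H

/-- `H/K` is a chief factor of `G`. -/
def IsChiefFactor (G : Type*) [Group G] (K H : Subgroup G) : Prop :=
  K.Normal ∧ H.Normal ∧ K < H ∧
    ∀ N : Subgroup G, N.Normal → K ≤ N → N ≤ H → N = K ∨ N = H

/-- `G` is σ-soluble: every chief factor of `G` is σ-primary. -/
def IsSigmaSoluble (σ : ι → Set ℕ) (G : Type*) [Group G] : Prop :=
  ∀ K H : Subgroup G, ∀ hc : IsChiefFactor G K H,
    letI := hc.1; IsSigmaPrimary σ (↥H ⧸ K.subgroupOf H)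

/-- The σ-nilpotent residual `G^{𝔑_σ}` of `G`. -/
def sigmaNilpotentResidual (σ : ι → Set ℕ) (G : Type*) [Group G] : Subgroup G :=
  sInf {N : Subgroup G | ∃ h : N.Normal, letI := h; IsSigmaNilpotent σ (G ⧸ N)}

/-- The σ-soluble residual `G^{𝔖_σ}` of `G`. -/
def sigmaSolubleResidual (σ : ι → Set ℕ) (G : Type*) [Group G] : Subgroup G :=
  sInf {N : Subgroup G | ∃ h : N.Normal, letI := h; IsSigmaSoluble σ (G ⧸ N)}

/-- `G` is a σ-SC-group: every chief factor of `G` below `G^{𝔑_σ}` is simple. -/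
def IsSigmaSCGroup (σ : ι → Set ℕ) (G : Type*) [Group G] : Prop :=
  ∀ K H : Subgroup G, ∀ hc : IsChiefFactor G K H, H ≤ sigmaNilpotentResidual σ G →
    letI := hc.1; IsSimpleGroup (↥H ⧸ K.subgroupOf H)

/-- `G` is σ-supersoluble: every chief factor of `G` below `G^{𝔑_σ}` is cyclic. -/
def IsSigmaSupersoluble (σ : ι → Set ℕ) (G : Type*) [Group G] : Prop :=
  ∀ K H : Subgroup G, ∀ hc : IsChiefFactor G K H, H ≤ sigmaNilpotentResidual σ G →
    letI := hc.1; IsCyclic (↥H ⧸ K.subgroupOf H)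

/-- The σ-supersoluble residual `G^{𝔘_σ}` of `G`. -/
def sigmaSupersolubleResidual (σ : ι → Set ℕ) (G : Type*) [Group G] : Subgroup G :=
  sInf {N : Subgroup G | ∃ h : N.Normal, letI := h; IsSigmaSupersoluble σ (G ⧸ N)}

/-- The soluble radical `G_𝔖`: the largest soluble normal subgroup of `G`. -/
def solubleRadical (G : Type*) [Group G] : Subgroup G :=
  sSup {N : Subgroup G | N.Normal ∧ IsSolvable ↥N}

/-- `O_{σ i}(G)`: the largest normal `σ i`-subgroup of `G`. -/
def sigmaCore (σ : ι → Set ℕ) (i : ι) (G : Type*) [Group G] : Subgroup G :=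
  sSup {N : Subgroup G | N.Normal ∧ IsSigmaIGroup σ i ↥N}

/-- `O^{σ i}(G)`: the smallest normal subgroup of `G` with `σ i`-quotient. -/
def sigmaIResidual (σ : ι → Set ℕ) (i : ι) (G : Type*) [Group G] : Subgroup G :=
  sInf {N : Subgroup G | ∃ h : N.Normal, letI := h; IsSigmaIGroup σ i (G ⧸ N)}

end Defs

/-! At each step `M ≤ B` of a σ-subnormal chain `A = C₀ ≤ ⋯ ≤ Cₙ = G`, either `M ⊴ B`, or the
core `Q = M_B` has σ-primary quotient `B/Q`; then `A/(A ∩ Q)` embeds in `B/Q`, so it is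
σ-primary, hence σ-nilpotent, and `A^{𝔑_σ} ≤ Q`. Either way `A^{𝔑_σ}` lies in some `N ≤ M` normal
in `B`. Intersecting these subgroups from the top of the chain down gives a subnormal `D` of `G`
with `A^{𝔑_σ} ≤ D ≤ A`, and `A^{𝔑_σ}` is normal in `A`, hence in `D`. -/

namespace Subgroup

variable {G : Type*} [Group G]

lemma Normal.subgroupOf_of_le {N B K : Subgroup G} (hN : (N.subgroupOf B).Normal)
    (hKB : K ≤ B) : (N.subgroupOf K).Normal :=
  ⟨(hN.comap (inclusion hKB)).conj_mem⟩

lemma IsSubnormal.inf_of_normal_subgroupOf {N B K : Subgroup G} (hK : K.IsSubnormal)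
    (hKB : K ≤ B) (hN : (N.subgroupOf B).Normal) : (N ⊓ K).IsSubnormal :=
  .step _ K inf_le_right hK <| (inf_subgroupOf_right N K).symm ▸ hN.subgroupOf_of_le hKB

lemma IsSubnormal.isSubnormalSub {H : Subgroup G} (hH : H.IsSubnormal) : IsSubnormalSub H := by
  obtain ⟨n, f, hmono, hnormal, hf0, hfn⟩ := hH.exists_chain
  exact ⟨n, fun k => f k, hf0, hfn, fun k => ⟨hmono (Nat.le_succ k), hnormal k⟩⟩

lemma Normal.le_normalizer_map_subtype {A : Subgroup G} {N : Subgroup A} (hN : N.Normal) :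
    A ≤ normalizer (N.map A.subtype : Set G) := by
  calc A = (normalizer (N : Set A)).map A.subtype := by
        rw [normalizer_eq_top_iff.mpr hN, ← MonoidHom.range_eq_map, range_subtype]
    _ ≤ _ := le_normalizer_map _

lemma exists_isSubnormal_between_of_chain {R : Subgroup G} {n : ℕ}
    (C : Fin (n + 1) → Subgroup G) (hC : C (Fin.last n) = ⊤)
    (hstep : ∀ k : Fin n, ∃ N : Subgroup G, R ≤ N ∧ N ≤ C k.castSucc ∧
      (N.subgroupOf (C k.succ)).Normal) :
    ∃ D : Subgroup G, D.IsSubnormal ∧ R ≤ D ∧ D ≤ C 0 := by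
  suffices ∀ k, ∃ D : Subgroup G, D.IsSubnormal ∧ R ≤ D ∧ D ≤ C k from this 0
  refine Fin.reverseInduction ⟨⊤, .top, le_top, hC.ge⟩ fun k ⟨D, hD, hRD, hDC⟩ => ?_
  obtain ⟨N, hRN, hNC, hN⟩ := hstep k
  exact ⟨N ⊓ D, hD.inf_of_normal_subgroupOf hDC hN, le_inf hRN hRD, inf_le_left.trans hNC⟩

end Subgroup

open Subgroup

section SigmaNilpotentResidual

variable {ι : Type*} {σ : ι → Set ℕ}

lemma IsSigmaNumber.of_dvd {i : ι} {m n : ℕ} (hn : IsSigmaNumber σ i n)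
    (hmn : m ∣ n) : IsSigmaNumber σ i m :=
  fun p hp hpm => hn p hp (hpm.trans hmn)

lemma IsSigmaIGroup.isSigmaNilpotent {X : Type*} [Group X] {i : ι}
    (hX : IsSigmaIGroup σ i X) : IsSigmaNilpotent σ X := by
  classical
  refine ⟨fun j => if j = i then ⊤ else ⊥, fun j => ?_, fun j => ?_, fun j => ?_, ?_⟩
  · dsimp only
    split <;> infer_instance
  · rcases eq_or_ne j i with rfl | hj
    · simpa [IsSigmaIGroup] using hX
    · intro p hp hdvd
      simp only [if_neg hj, card_bot, Nat.dvd_one] at hdvd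
      exact absurd hdvd hp.ne_one
  · rcases eq_or_ne j i with rfl | hj
    · simp +contextual
    · simp [hj]
  · exact top_unique (le_iSup_of_le i (by simp))

lemma sigmaNilpotentResidual_normal (X : Type*) [Group X] :
    (sigmaNilpotentResidual σ X).Normal := by
  rw [sigmaNilpotentResidual, sInf_eq_iInf']
  exact normal_iInf_normal fun N => N.2.1

lemma sigmaNilpotentResidual_le_ker {X Y : Type*} [Group X] [Group Y] {i : ι} (f : X →* Y)
    (hY : IsSigmaIGroup σ i Y) : sigmaNilpotentResidual σ X ≤ f.ker := by
  refine sInf_le ⟨inferInstance, IsSigmaIGroup.isSigmaNilpotent (hY.of_dvd ?_)⟩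
  rw [Nat.card_congr (QuotientGroup.quotientKerEquivRange f).toEquiv]
  exact f.range.card_subgroup_dvd_card

variable {G : Type*} [Group G]

lemma map_sigmaNilpotentResidual_le_of_isSigmaPrimary {A B : Subgroup G} (hAB : A ≤ B)
    {Q : Subgroup B} [Q.Normal] (hQ : IsSigmaPrimary σ (B ⧸ Q)) :
    (sigmaNilpotentResidual σ A).map A.subtype ≤ Q.map B.subtype := by
  obtain ⟨i, hi⟩ := hQ
  rintro _ ⟨a, ha, rfl⟩
  have hker := sigmaNilpotentResidual_le_ker ((QuotientGroup.mk' Q).comp (inclusion hAB)) hi ha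
  rw [MonoidHom.mem_ker, MonoidHom.comp_apply, QuotientGroup.mk'_apply,
    QuotientGroup.eq_one_iff] at hker
  exact ⟨_, hker, rfl⟩

lemma SigmaSubnormalStep.exists_normal_between {A M B : Subgroup G}
    (hMB : SigmaSubnormalStep σ M B) (hAM : A ≤ M) :
    ∃ N : Subgroup G, (sigmaNilpotentResidual σ A).map A.subtype ≤ N ∧ N ≤ M ∧
      (N.subgroupOf B).Normal := by
  obtain ⟨hMB, hM | hcore⟩ := hMB
  · exact ⟨M, (map_subtype_le _).trans hAM, le_rfl, hM⟩
  · refine ⟨(M.subgroupOf B).normalCore.map B.subtype,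
      map_sigmaNilpotentResidual_le_of_isSigmaPrimary (hAM.trans hMB) hcore, ?_, ?_⟩
    · calc _ ≤ (M.subgroupOf B).map B.subtype := map_mono (normalCore_le _)
        _ = M ⊓ B := subgroupOf_map_subtype M B
        _ ≤ M := inf_le_left
    · rw [← comap_subtype, comap_map_eq_self_of_injective B.subtype_injective]
      exact normalCore_normal _

end SigmaNilpotentResidual

theorem statement_8_general {ι : Type*} (σ : ι → Set ℕ)
    {G : Type*} [Group G] (A : Subgroup G)
    (hA : IsSigmaSubnormal σ A) :
    IsSubnormalSub ((sigmaNilpotentResidual σ ↥A).map A.subtype) := by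
  obtain ⟨n, C, hC0, hCn, hstep⟩ := hA
  have hAC : ∀ k, A ≤ C k := fun k =>
    hC0 ▸ Fin.monotone_iff_le_succ.2 (fun k => (hstep k).1) (Fin.zero_le k)
  obtain ⟨D, hD, hRD, hDA⟩ := exists_isSubnormal_between_of_chain C hCn fun k =>
    (hstep k).exists_normal_between (hAC _)
  refine IsSubnormal.isSubnormalSub (.step _ D hRD hD ?_)
  rw [normal_subgroupOf_iff_le_normalizer hRD]
  exact (hC0 ▸ hDA).trans (sigmaNilpotentResidual_normal A).le_normalizer_map_subtype

/-- If `A` is σ-subnormal in the finite group `G`, then the σ-nilpotent residual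
`A^{𝔑_σ}` of `A` is subnormal in `G`. -/
theorem statement_8 {ι : Type*} (σ : ι → Set ℕ) (hσ : IsPrimePartition σ)
    {G : Type*} [Group G] [Finite G] (A : Subgroup G)
    (hA : IsSigmaSubnormal σ A) :
    IsSubnormalSub ((sigmaNilpotentResidual σ ↥A).map A.subtype) :=
  statement_8_general σ A hA
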